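/- arXiv:2506.01866 — 5 statements merged into one kernel-verified Lean document; each statement's English description precedes it below -/
import Mathlib

section
/- Fix a step size h > 0, a nonnegative integer T_i with T_i ≥ 1, an integer T_{i+1} with T_{i+1} > T_i, and a real sequence (x^k). Assume there exists at least one triple (α*, β*, γ*) ∈ ℝ³ that generated the data, i.e., x^{T_i} = (1 + α*) x^{T_i−1} and x^{k+1} = x^k + h(β*(1 − x^k)x^k − γ* x^k) for all integers k with T_i ≤ k ≤ T_{i+1} − 2. Then the generating triple is unique — i.e., any two triples (α, β, γ), (α', β', γ') ∈ ℝ³ each satisfying x^{T_i} = (1 + α) x^{T_i−1} and x^{k+1} = x^k + h(β(1 − x^k)x^k − γ x^k) for all T_i ≤ k ≤ T_{i+1} − 2 must be equal — if and only if the following three conditions all hold: (1) T_{i+1} − T_i > 2; (2) there exist k₁, k₂ ∈ {T_i, T_i + 1, …, T_{i+1} − 2} such that x^{k₁}(1 − x^{k₂})x^{k₂} ≠ x^{k₂}(1 − x^{k₁})x^{k₁}; and (3) x^{T_i−1} ≠ 0. -/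
/-- One update-interval consistency: the triple `(α, β, γ)` generates the data
`x` on the interval: the jump equation at `Ti` and the discrete SIS dynamics
for all `k` with `Ti ≤ k ≤ Tn - 2`. -/
def ConsistentTriple (h : ℝ) (Ti Tn : ℕ) (x : ℕ → ℝ) (p : ℝ × ℝ × ℝ) : Prop :=
  x Ti = (1 + p.1) * x (Ti - 1) ∧
  ∀ k, Ti ≤ k → k + 2 ≤ Tn →
    x (k + 1) = x k + h * (p.2.1 * (1 - x k) * x k - p.2.2 * x k)

/-- Lemma 1 (identifiability on a middle update interval): assuming at least one
generating triple `(α, β, γ)` exists, it is unique iff `T_{i+1} - T_i > 2`,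
there are `k₁, k₂ ∈ {T_i, …, T_{i+1} - 2}` with
`x^{k₁}(1 - x^{k₂})x^{k₂} ≠ x^{k₂}(1 - x^{k₁})x^{k₁}`, and `x^{T_i - 1} ≠ 0`. -/
theorem update_interval_identifiability
    (h : ℝ) (hh : 0 < h) (Ti Tn : ℕ) (hTi : 1 ≤ Ti) (hT : Ti < Tn)
    (x : ℕ → ℝ)
    (hex : ∃ p : ℝ × ℝ × ℝ, ConsistentTriple h Ti Tn x p) :
    (∀ p q : ℝ × ℝ × ℝ,
        ConsistentTriple h Ti Tn x p → ConsistentTriple h Ti Tn x q → p = q) ↔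
      (Ti + 2 < Tn ∧
        (∃ k₁ k₂, (Ti ≤ k₁ ∧ k₁ + 2 ≤ Tn) ∧ (Ti ≤ k₂ ∧ k₂ + 2 ≤ Tn) ∧
          x k₁ * (1 - x k₂) * x k₂ ≠ x k₂ * (1 - x k₁) * x k₁) ∧
        x (Ti - 1) ≠ 0) := by
  obtain ⟨⟨a, b, c⟩, hjump, hdyn⟩ := hex
  constructor
  · intro huniq
    -- (3): x (Ti - 1) ≠ 0
    have h3 : x (Ti - 1) ≠ 0 := by
      intro h0
      have hxt : x Ti = 0 := by rw [hjump, h0]; ring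
      have heq := huniq (a, b, c) (a + 1, b, c)
        ⟨hjump, hdyn⟩
        ⟨by rw [hxt, h0]; ring, hdyn⟩
      have : a = a + 1 := congrArg Prod.fst heq
      linarith
    -- (2): the cross-product condition
    have h2 : ∃ k₁ k₂, (Ti ≤ k₁ ∧ k₁ + 2 ≤ Tn) ∧ (Ti ≤ k₂ ∧ k₂ + 2 ≤ Tn) ∧
        x k₁ * (1 - x k₂) * x k₂ ≠ x k₂ * (1 - x k₁) * x k₁ := by
      by_contra hcon
      push_neg at hcon
      by_cases hz : ∃ k0, (Ti ≤ k0 ∧ k0 + 2 ≤ Tn) ∧ x k0 ≠ 0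
      · obtain ⟨k0, ⟨hk0a, hk0b⟩, hk0⟩ := hz
        have hdyn' : ∀ k, Ti ≤ k → k + 2 ≤ Tn →
            x (k + 1) = x k + h * ((b + x k0) * (1 - x k) * x k
              - (c + (1 - x k0) * x k0) * x k) := by
          intro k hka hkb
          have heq := hcon k0 k ⟨hk0a, hk0b⟩ ⟨hka, hkb⟩
          have := hdyn k hka hkb
          rw [this]
          ring_nf
          nlinarith [heq]
        have heq := huniq (a, b, c) (a, b + x k0, c + (1 - x k0) * x k0)
          ⟨hjump, hdyn⟩ ⟨hjump, hdyn'⟩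
        have : b = b + x k0 := congrArg (fun p => p.2.1) heq
        exact hk0 (by linarith)
      · push_neg at hz
        have hdyn' : ∀ k, Ti ≤ k → k + 2 ≤ Tn →
            x (k + 1) = x k + h * ((b + 1) * (1 - x k) * x k - c * x k) := by
          intro k hka hkb
          have hx0 : x k = 0 := hz k ⟨hka, hkb⟩
          have := hdyn k hka hkb
          rw [this, hx0]; ring
        have heq := huniq (a, b, c) (a, b + 1, c)
          ⟨hjump, hdyn⟩ ⟨hjump, hdyn'⟩
        have : b = b + 1 := congrArg (fun p => p.2.1) heq
        linarith
    -- (1): follows from (2)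
    obtain ⟨k₁, k₂, ⟨h1a, h1b⟩, ⟨h2a, h2b⟩, hne⟩ := h2
    have hkne : k₁ ≠ k₂ := by
      intro hkk
      exact hne (by rw [hkk])
    refine ⟨by omega, ⟨k₁, k₂, ⟨h1a, h1b⟩, ⟨h2a, h2b⟩, hne⟩, h3⟩
  · rintro ⟨h1, ⟨k₁, k₂, ⟨h1a, h1b⟩, ⟨h2a, h2b⟩, hne⟩, h3⟩
    rintro ⟨pa, pb, pc⟩ ⟨qa, qb, qc⟩ ⟨hpj, hpd⟩ ⟨hqj, hqd⟩
    have ha : pa = qa := by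
      have := hpj.symm.trans hqj
      have h' : (1 + pa) = (1 + qa) := mul_right_cancel₀ h3 this
      linarith
    -- cancel h in the dynamics equations
    have key : ∀ k, Ti ≤ k → k + 2 ≤ Tn →
        (pb - qb) * ((1 - x k) * x k) = (pc - qc) * x k := by
      intro k hka hkb
      have e1 := hpd k hka hkb
      have e2 := hqd k hka hkb
      have e3 : h * (pb * (1 - x k) * x k - pc * x k)
          = h * (qb * (1 - x k) * x k - qc * x k) := by linarith [e1.symm.trans e2]
      have e4 := mul_left_cancel₀ (ne_of_gt hh) e3
      linear_combination e4
    have e1 := key k₁ h1a h1b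
    have e2 := key k₂ h2a h2b
    have hdne : x k₂ * (1 - x k₁) * x k₁ - x k₁ * (1 - x k₂) * x k₂ ≠ 0 := by
      intro hd
      exact hne (by linarith)
    have hb : pb = qb := by
      have h0 : (pb - qb) * (x k₂ * (1 - x k₁) * x k₁ - x k₁ * (1 - x k₂) * x k₂) = 0 := by
        linear_combination x k₂ * e1 - x k₁ * e2
      rcases mul_eq_zero.mp h0 with h' | h'
      · linarith
      · exact absurd h' hdne
    have hc : pc = qc := by
      have h0 : (pc - qc) * (x k₂ * (1 - x k₁) * x k₁ - x k₁ * (1 - x k₂) * x k₂) = 0 := by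
        linear_combination ((1 - x k₂) * x k₂) * e1 - ((1 - x k₁) * x k₁) * e2
      rcases mul_eq_zero.mp h0 with h' | h'
      · linarith
      · exact absurd h' hdne
    simp [ha, hb, hc]
end

section
/- Fix a step size h > 0, a nonnegative integer T_i with T_i ≥ 1, an integer T_{i+1} with T_{i+1} > T_i, and a real sequence (x^k) satisfying x^k > 0 for all k with T_i − 1 ≤ k ≤ T_{i+1} − 2. Assume there exists at least one triple (α*, β*, γ*) ∈ ℝ³ such that x^{T_i} = (1 + α*) x^{T_i−1} and x^{k+1} = x^k + h(β*(1 − x^k)x^k − γ* x^k) for all integers k with T_i ≤ k ≤ T_{i+1} − 2. Then the generating triple is unique (any two consistent triples are equal) if and only if T_{i+1} − T_i > 2 and there exist k₁, k₂ ∈ {T_i, T_i + 1, …, T_{i+1} − 2} such that x^{k₁} ≠ x^{k₂}. -/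
/-- Corollary (identifiability under positive states): if `x^k > 0` for all
`T_i - 1 ≤ k ≤ T_{i+1} - 2` and at least one generating triple exists, then the
triple is unique iff `T_{i+1} - T_i > 2` and there are
`k₁, k₂ ∈ {T_i, …, T_{i+1} - 2}` with `x^{k₁} ≠ x^{k₂}`. -/
theorem update_interval_identifiability_positive
    (h : ℝ) (hh : 0 < h) (Ti Tn : ℕ) (hTi : 1 ≤ Ti) (hT : Ti < Tn)
    (x : ℕ → ℝ)
    (hpos : ∀ k, Ti - 1 ≤ k → k + 2 ≤ Tn → 0 < x k)
    (hex : ∃ p : ℝ × ℝ × ℝ, ConsistentTriple h Ti Tn x p) :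
    (∀ p q : ℝ × ℝ × ℝ,
        ConsistentTriple h Ti Tn x p → ConsistentTriple h Ti Tn x q → p = q) ↔
      (Ti + 2 < Tn ∧
        ∃ k₁ k₂, (Ti ≤ k₁ ∧ k₁ + 2 ≤ Tn) ∧ (Ti ≤ k₂ ∧ k₂ + 2 ≤ Tn) ∧
          x k₁ ≠ x k₂) := by
  obtain ⟨p0, hp0⟩ := hex
  constructor
  · intro huniq
    by_contra hcon
    push_neg at hcon
    -- In the negated situation, all states on the interval equal `x Ti`.
    have hall : ∀ k, Ti ≤ k → k + 2 ≤ Tn → x k = x Ti := by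
      intro k hk hk2
      by_cases hcase : Ti + 2 < Tn
      · exact hcon hcase k Ti ⟨hk, hk2⟩ ⟨le_refl _, by omega⟩
      · have : k = Ti := by omega
        rw [this]
    -- A second consistent triple.
    set q : ℝ × ℝ × ℝ := (p0.1, p0.2.1 + 1, p0.2.2 + (1 - x Ti)) with hqdef
    have hq : ConsistentTriple h Ti Tn x q := by
      constructor
      · exact hp0.1
      · intro k hk hk2
        have hx := hall k hk hk2
        have e := hp0.2 k hk hk2
        rw [e, hx]
        show x Ti + h * (p0.2.1 * (1 - x Ti) * x Ti - p0.2.2 * x Ti) =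
          x Ti + h * ((p0.2.1 + 1) * (1 - x Ti) * x Ti - (p0.2.2 + (1 - x Ti)) * x Ti)
        ring
    have := congrArg (fun r : ℝ × ℝ × ℝ => r.2.1) (huniq p0 q hp0 hq)
    simp [hqdef] at this
  · rintro ⟨hT2, k₁, k₂, ⟨h1a, h1b⟩, ⟨h2a, h2b⟩, hne⟩ p q hp hq
    -- α is determined
    have hx0 : 0 < x (Ti - 1) := hpos (Ti - 1) le_rfl (by omega)
    have hα : p.1 = q.1 := by
      have e : (1 + p.1) * x (Ti - 1) = (1 + q.1) * x (Ti - 1) := by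
        rw [← hp.1, hq.1]
      have := mul_right_cancel₀ (ne_of_gt hx0) e
      linarith
    -- normalized dynamics equations
    have key : ∀ k, Ti ≤ k → k + 2 ≤ Tn →
        p.2.1 * (1 - x k) - p.2.2 = q.2.1 * (1 - x k) - q.2.2 := by
      intro k hk hk2
      have hxk : 0 < x k := hpos k (by omega) hk2
      have e1 := hp.2 k hk hk2
      have e2 := hq.2 k hk hk2
      have e3 : h * ((p.2.1 * (1 - x k) - p.2.2) * x k) =
          h * ((q.2.1 * (1 - x k) - q.2.2) * x k) := by
        linear_combination e2 - e1
      have e4 := mul_left_cancel₀ (ne_of_gt hh) e3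
      exact mul_right_cancel₀ (ne_of_gt hxk) e4
    have e1 := key k₁ h1a h1b
    have e2 := key k₂ h2a h2b
    have hβ : p.2.1 = q.2.1 := by
      have hz : (p.2.1 - q.2.1) * (x k₂ - x k₁) = 0 := by
        linear_combination e1 - e2
      rcases mul_eq_zero.mp hz with hzz | hzz
      · linarith [sub_eq_zero.mp hzz]
      · exact absurd (sub_eq_zero.mp hzz).symm hne
    have hγ : p.2.2 = q.2.2 := by linear_combination (1 - x k₁) * hβ - e1
    obtain ⟨pa, pb, pc⟩ := p
    obtain ⟨qa, qb, qc⟩ := q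
    simp only [Prod.mk.injEq]
    exact ⟨hα, hβ, hγ⟩
end

section
/- Fix a step size h > 0, a positive integer m, update indices 0 = T₀ < T₁ < T₂ < … < T_m < T_{m+1} (all natural numbers), and a real sequence (x^k), 0 ≤ k ≤ T_{m+1}. Call a parameter vector Θ = (β₀, γ₀, α₁, β₁, γ₁, …, α_m, β_m, γ_m) ∈ ℝ^{3m+2} consistent with the data if: x^{k+1} = x^k + h(β₀(1 − x^k)x^k − γ₀ x^k) for 0 ≤ k ≤ T₁ − 2; for each i ∈ {1, …, m}, x^{T_i} = (1 + α_i) x^{T_i−1}; for each i ∈ {1, …, m−1}, x^{k+1} = x^k + h(β_i(1 − x^k)x^k − γ_i x^k) for T_i ≤ k ≤ T_{i+1} − 2; and x^{k+1} = x^k + h(β_m(1 − x^k)x^k − γ_m x^k) for T_m ≤ k ≤ T_{m+1} − 1. Assume at least one consistent parameter vector exists. Then the consistent parameter vector is unique if and only if all of the following hold: (for i = 0) T₁ > 2 and there exist k₁, k₂ ∈ {0, 1, …, T₁ − 2} with x^{k₁}(1 − x^{k₂})x^{k₂} ≠ x^{k₂}(1 − x^{k₁})x^{k₁}; (for every i ∈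 {1, …, m−1}) T_{i+1} − T_i > 2, there exist k₁, k₂ ∈ {T_i, …, T_{i+1} − 2} with x^{k₁}(1 − x^{k₂})x^{k₂} ≠ x^{k₂}(1 − x^{k₁})x^{k₁}, and x^{T_i−1} ≠ 0; and (for i = m) T_{m+1} − T_m > 1, there exist k₁, k₂ ∈ {T_m, …, T_{m+1} − 1} with x^{k₁}(1 − x^{k₂})x^{k₂} ≠ x^{k₂}(1 − x^{k₁})x^{k₁}, and x^{T_m−1} ≠ 0. -/
/-- The full parameter vector `Θ = (β₀, γ₀, α₁, β₁, γ₁, …, α_m, β_m, γ_m)`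
(encoded by the functions `α β γ : ℕ → ℝ` on the relevant indices) is
consistent with the data `x` for update times `T 0 < T 1 < ⋯ < T (m+1)`:
SIS dynamics on `0 ≤ k ≤ T 1 - 2` with `(β 0, γ 0)`, the jump equation at each
`T i` for `1 ≤ i ≤ m`, SIS dynamics on `T i ≤ k ≤ T (i+1) - 2` with
`(β i, γ i)` for `1 ≤ i ≤ m - 1`, and SIS dynamics on
`T m ≤ k ≤ T (m+1) - 1` with `(β m, γ m)`. -/
def ConsistentVector (h : ℝ) (m : ℕ) (T : ℕ → ℕ) (x : ℕ → ℝ)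
    (α β γ : ℕ → ℝ) : Prop :=
  (∀ k, k + 2 ≤ T 1 →
      x (k + 1) = x k + h * (β 0 * (1 - x k) * x k - γ 0 * x k)) ∧
  (∀ i, 1 ≤ i → i ≤ m → x (T i) = (1 + α i) * x (T i - 1)) ∧
  (∀ i, 1 ≤ i → i + 1 ≤ m → ∀ k, T i ≤ k → k + 2 ≤ T (i + 1) →
      x (k + 1) = x k + h * (β i * (1 - x k) * x k - γ i * x k)) ∧
  (∀ k, T m ≤ k → k + 1 ≤ T (m + 1) →
      x (k + 1) = x k + h * (β m * (1 - x k) * x k - γ m * x k))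

/-- Auxiliary: uniqueness of `(β, γ)` from two equations with nonzero determinant. -/
lemma sis_unique_aux (h β γ β' γ' x1 x2 : ℝ) (hh : h ≠ 0)
    (e1 : h * (β * (1 - x1) * x1 - γ * x1) = h * (β' * (1 - x1) * x1 - γ' * x1))
    (e2 : h * (β * (1 - x2) * x2 - γ * x2) = h * (β' * (1 - x2) * x2 - γ' * x2))
    (hd : x1 * (1 - x2) * x2 ≠ x2 * (1 - x1) * x1) :
    β = β' ∧ γ = γ' := by
  have f1 : β * (1 - x1) * x1 - γ * x1 = β' * (1 - x1) * x1 - γ' * x1 :=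
    mul_left_cancel₀ hh e1
  have f2 : β * (1 - x2) * x2 - γ * x2 = β' * (1 - x2) * x2 - γ' * x2 :=
    mul_left_cancel₀ hh e2
  have hb : β = β' := by
    have hu : (β - β') * (x2 * (1 - x1) * x1 - x1 * (1 - x2) * x2) = 0 := by
      linear_combination x2 * f1 - x1 * f2
    rcases mul_eq_zero.1 hu with h1 | h1
    · have := sub_eq_zero.1 h1; linarith
    · exact absurd (sub_eq_zero.1 h1).symm hd
  refine ⟨hb, ?_⟩
  subst hb
  have g1 : (γ - γ') * x1 = 0 := by linear_combination -f1
  have g2 : (γ - γ') * x2 = 0 := by linear_combination -f2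
  rcases mul_eq_zero.1 g1 with h1 | h1
  · linarith
  · rcases mul_eq_zero.1 g2 with h2 | h2
    · linarith
    · exact absurd (by simp [h1, h2]) hd

/-- Auxiliary: if all determinants over a region vanish, the dynamics terms
are proportional on the region. -/
lemma flat_slope (x : ℕ → ℝ) (P : ℕ → Prop)
    (hdf : ∀ k₁ k₂, P k₁ → P k₂ →
      x k₁ * (1 - x k₂) * x k₂ = x k₂ * (1 - x k₁) * x k₁) :
    ∃ c : ℝ, ∀ k, P k → (1 - x k) * x k = c * x k := by
  by_cases hC : ∃ k₀, P k₀ ∧ x k₀ ≠ 0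
  · obtain ⟨k₀, hk₀, hx0⟩ := hC
    refine ⟨1 - x k₀, fun k hk => ?_⟩
    by_cases hxk : x k = 0
    · rw [hxk]; ring
    · have hd := hdf k k₀ hk hk₀
      have h2 : (1 - x k) * x k * x k₀ = ((1 - x k₀) * x k) * x k₀ := by
        linear_combination -hd
      exact mul_right_cancel₀ hx0 h2
  · push_neg at hC
    exact ⟨0, fun k hk => by rw [hC k hk]; ring⟩

/-- Theorem 1 (identifiability of the full hybrid model): assuming at least one
consistent parameter vector exists, it is unique iff
(i = 0) `T 1 > 2` and the inequality condition holds on `{0, …, T 1 - 2}`;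
(1 ≤ i ≤ m-1) `T (i+1) - T i > 2`, the inequality condition holds on
`{T i, …, T (i+1) - 2}`, and `x (T i - 1) ≠ 0`;
(i = m) `T (m+1) - T m > 1`, the inequality condition holds on
`{T m, …, T (m+1) - 1}`, and `x (T m - 1) ≠ 0`. -/
theorem hybrid_model_identifiability
    (h : ℝ) (hh : 0 < h) (m : ℕ) (hm : 1 ≤ m)
    (T : ℕ → ℕ) (hT0 : T 0 = 0) (hTmono : ∀ i, i ≤ m → T i < T (i + 1))
    (x : ℕ → ℝ)
    (hex : ∃ α β γ : ℕ → ℝ, ConsistentVector h m T x α β γ) :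
    (∀ α β γ α' β' γ' : ℕ → ℝ,
        ConsistentVector h m T x α β γ → ConsistentVector h m T x α' β' γ' →
        β 0 = β' 0 ∧ γ 0 = γ' 0 ∧
          ∀ i, 1 ≤ i → i ≤ m → α i = α' i ∧ β i = β' i ∧ γ i = γ' i) ↔
      ((2 < T 1 ∧
          ∃ k₁ k₂, k₁ + 2 ≤ T 1 ∧ k₂ + 2 ≤ T 1 ∧
            x k₁ * (1 - x k₂) * x k₂ ≠ x k₂ * (1 - x k₁) * x k₁) ∧
        (∀ i, 1 ≤ i → i + 1 ≤ m →
          T i + 2 < T (i + 1) ∧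
          (∃ k₁ k₂, (T i ≤ k₁ ∧ k₁ + 2 ≤ T (i + 1)) ∧
              (T i ≤ k₂ ∧ k₂ + 2 ≤ T (i + 1)) ∧
              x k₁ * (1 - x k₂) * x k₂ ≠ x k₂ * (1 - x k₁) * x k₁) ∧
          x (T i - 1) ≠ 0) ∧
        (T m + 1 < T (m + 1) ∧
          (∃ k₁ k₂, (T m ≤ k₁ ∧ k₁ + 1 ≤ T (m + 1)) ∧
              (T m ≤ k₂ ∧ k₂ + 1 ≤ T (m + 1)) ∧
              x k₁ * (1 - x k₂) * x k₂ ≠ x k₂ * (1 - x k₁) * x k₁) ∧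
          x (T m - 1) ≠ 0)) := by
  have hne : h ≠ 0 := ne_of_gt hh
  constructor
  · -- uniqueness → conditions
    intro U
    obtain ⟨α, β, γ, hc⟩ := hex
    obtain ⟨h1c, h2c, h3c, h4c⟩ := hc
    -- determinant condition on the first interval
    have E0 : ∃ k₁ k₂, k₁ + 2 ≤ T 1 ∧ k₂ + 2 ≤ T 1 ∧
        x k₁ * (1 - x k₂) * x k₂ ≠ x k₂ * (1 - x k₁) * x k₁ := by
      by_contra hdf
      push_neg at hdf
      obtain ⟨c, hcc⟩ := flat_slope x (fun k => k + 2 ≤ T 1)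
        (fun k₁ k₂ h₁ h₂ => hdf k₁ k₂ h₁ h₂)
      set β' := Function.update β 0 (β 0 + 1) with hβ'
      set γ' := Function.update γ 0 (γ 0 + c) with hγ'
      have hc' : ConsistentVector h m T x α β' γ' := by
        refine ⟨fun k hk => ?_, h2c, fun i hi1 hi2 k hk1 hk2 => ?_,
          fun k hk1 hk2 => ?_⟩
        · rw [hβ', hγ', Function.update_self, Function.update_self]
          linear_combination h1c k hk - h * hcc k hk
        · have hi0 : i ≠ 0 := by omega
          rw [hβ', hγ', Function.update_of_ne hi0, Function.update_of_ne hi0]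
          exact h3c i hi1 hi2 k hk1 hk2
        · have hm0 : m ≠ 0 := by omega
          rw [hβ', hγ', Function.update_of_ne hm0, Function.update_of_ne hm0]
          exact h4c k hk1 hk2
      have hU := (U α β γ α β' γ' ⟨h1c, h2c, h3c, h4c⟩ hc').1
      rw [hβ', Function.update_self] at hU
      linarith
    -- determinant condition on the middle intervals
    have Emid : ∀ i, 1 ≤ i → i + 1 ≤ m →
        ∃ k₁ k₂, (T i ≤ k₁ ∧ k₁ + 2 ≤ T (i + 1)) ∧
          (T i ≤ k₂ ∧ k₂ + 2 ≤ T (i + 1)) ∧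
          x k₁ * (1 - x k₂) * x k₂ ≠ x k₂ * (1 - x k₁) * x k₁ := by
      intro i hi1 hi2
      by_contra hdf
      push_neg at hdf
      obtain ⟨c, hcc⟩ := flat_slope x (fun k => T i ≤ k ∧ k + 2 ≤ T (i + 1))
        (fun k₁ k₂ h₁ h₂ => hdf k₁ k₂ h₁ h₂)
      set β' := Function.update β i (β i + 1) with hβ'
      set γ' := Function.update γ i (γ i + c) with hγ'
      have hc' : ConsistentVector h m T x α β' γ' := by
        refine ⟨fun k hk => ?_, h2c, fun j hj1 hj2 k hk1 hk2 => ?_,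
          fun k hk1 hk2 => ?_⟩
        · have h0i : (0 : ℕ) ≠ i := by omega
          rw [hβ', hγ', Function.update_of_ne h0i, Function.update_of_ne h0i]
          exact h1c k hk
        · by_cases hji : j = i
          · subst hji
            rw [hβ', hγ', Function.update_self, Function.update_self]
            linear_combination h3c j hj1 hj2 k hk1 hk2 - h * hcc k ⟨hk1, hk2⟩
          · rw [hβ', hγ', Function.update_of_ne hji, Function.update_of_ne hji]
            exact h3c j hj1 hj2 k hk1 hk2
        · have hmi : m ≠ i := by omega
          rw [hβ', hγ', Function.update_of_ne hmi, Function.update_of_ne hmi]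
          exact h4c k hk1 hk2
      have hU := ((U α β γ α β' γ' ⟨h1c, h2c, h3c, h4c⟩ hc').2.2 i hi1
        (by omega)).2.1
      rw [hβ', Function.update_self] at hU
      linarith
    -- determinant condition on the last interval
    have Em : ∃ k₁ k₂, (T m ≤ k₁ ∧ k₁ + 1 ≤ T (m + 1)) ∧
        (T m ≤ k₂ ∧ k₂ + 1 ≤ T (m + 1)) ∧
        x k₁ * (1 - x k₂) * x k₂ ≠ x k₂ * (1 - x k₁) * x k₁ := by
      by_contra hdf
      push_neg at hdf
      obtain ⟨c, hcc⟩ := flat_slope x (fun k => T m ≤ k ∧ k + 1 ≤ T (m + 1))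
        (fun k₁ k₂ h₁ h₂ => hdf k₁ k₂ h₁ h₂)
      set β' := Function.update β m (β m + 1) with hβ'
      set γ' := Function.update γ m (γ m + c) with hγ'
      have hc' : ConsistentVector h m T x α β' γ' := by
        refine ⟨fun k hk => ?_, h2c, fun j hj1 hj2 k hk1 hk2 => ?_,
          fun k hk1 hk2 => ?_⟩
        · have h0m : (0 : ℕ) ≠ m := by omega
          rw [hβ', hγ', Function.update_of_ne h0m, Function.update_of_ne h0m]
          exact h1c k hk
        · have hjm : j ≠ m := by omega
          rw [hβ', hγ', Function.update_of_ne hjm, Function.update_of_ne hjm]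
          exact h3c j hj1 hj2 k hk1 hk2
        · rw [hβ', hγ', Function.update_self, Function.update_self]
          linear_combination h4c k hk1 hk2 - h * hcc k ⟨hk1, hk2⟩
      have hU := ((U α β γ α β' γ' ⟨h1c, h2c, h3c, h4c⟩ hc').2.2 m hm
        le_rfl).2.1
      rw [hβ', Function.update_self] at hU
      linarith
    -- nonvanishing of x (T i - 1)
    have Ex : ∀ i, 1 ≤ i → i ≤ m → x (T i - 1) ≠ 0 := by
      intro i hi1 hi2 h0x
      set α' := Function.update α i (α i + 1) with hα'
      have hc' : ConsistentVector h m T x α' β γ := by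
        refine ⟨h1c, fun j hj1 hj2 => ?_, h3c, h4c⟩
        by_cases hji : j = i
        · subst hji
          have hz : x (T j) = 0 := by rw [h2c j hj1 hj2, h0x]; ring
          rw [hz, h0x]; ring
        · rw [hα', Function.update_of_ne hji]
          exact h2c j hj1 hj2
      have hU := ((U α β γ α' β γ ⟨h1c, h2c, h3c, h4c⟩ hc').2.2 i hi1 hi2).1
      rw [hα', Function.update_self] at hU
      linarith
    refine ⟨⟨?_, E0⟩, fun i hi1 hi2 => ⟨?_, Emid i hi1 hi2, Ex i hi1 (by omega)⟩,
      ⟨?_, Em, Ex m hm le_rfl⟩⟩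
    · obtain ⟨k₁, k₂, a, b, hd⟩ := E0
      have : k₁ ≠ k₂ := by rintro rfl; exact hd rfl
      omega
    · obtain ⟨k₁, k₂, a, b, hd⟩ := Emid i hi1 hi2
      have : k₁ ≠ k₂ := by rintro rfl; exact hd rfl
      omega
    · obtain ⟨k₁, k₂, a, b, hd⟩ := Em
      have : k₁ ≠ k₂ := by rintro rfl; exact hd rfl
      omega
  · -- conditions → uniqueness
    rintro ⟨⟨hT1, k₁, k₂, hk₁, hk₂, hd0⟩, Hmid, hTm, ⟨l₁, l₂, hl₁, hl₂, hdm⟩, hxm⟩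
    intro α β γ α' β' γ' hc hc'
    obtain ⟨h1c, h2c, h3c, h4c⟩ := hc
    obtain ⟨h1c', h2c', h3c', h4c'⟩ := hc'
    have hβγ0 : β 0 = β' 0 ∧ γ 0 = γ' 0 := by
      refine sis_unique_aux h (β 0) (γ 0) (β' 0) (γ' 0) (x k₁) (x k₂) hne ?_ ?_ hd0
      · have a1 := h1c k₁ hk₁; have a2 := h1c' k₁ hk₁; linarith
      · have a1 := h1c k₂ hk₂; have a2 := h1c' k₂ hk₂; linarith
    refine ⟨hβγ0.1, hβγ0.2, fun i hi1 hi2 => ?_⟩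
    have hxne : x (T i - 1) ≠ 0 := by
      by_cases hlt : i + 1 ≤ m
      · exact (Hmid i hi1 hlt).2.2
      · have : i = m := by omega
        rw [this]; exact hxm
    have hα : α i = α' i := by
      have e1 := h2c i hi1 hi2
      have e2 := h2c' i hi1 hi2
      have : (1 + α i) * x (T i - 1) = (1 + α' i) * x (T i - 1) := by
        rw [← e1, ← e2]
      have := mul_right_cancel₀ hxne this
      linarith
    refine ⟨hα, ?_⟩
    by_cases hlt : i + 1 ≤ m
    · obtain ⟨q₁, q₂, hq₁, hq₂, hdi⟩ := (Hmid i hi1 hlt).2.1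
      refine sis_unique_aux h (β i) (γ i) (β' i) (γ' i) (x q₁) (x q₂) hne ?_ ?_ hdi
      · have a1 := h3c i hi1 hlt q₁ hq₁.1 hq₁.2
        have a2 := h3c' i hi1 hlt q₁ hq₁.1 hq₁.2
        linarith
      · have a1 := h3c i hi1 hlt q₂ hq₂.1 hq₂.2
        have a2 := h3c' i hi1 hlt q₂ hq₂.1 hq₂.2
        linarith
    · have him : i = m := by omega
      subst him
      refine sis_unique_aux h (β i) (γ i) (β' i) (γ' i) (x l₁) (x l₂) hne ?_ ?_ hdm
      · have a1 := h4c l₁ hl₁.1 hl₁.2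
        have a2 := h4c' l₁ hl₁.1 hl₁.2
        linarith
      · have a1 := h4c l₂ hl₂.1 hl₂.2
        have a2 := h4c' l₂ hl₂.1 hl₂.2
        linarith
end

section
/- Fix a step size h > 0, a nonnegative integer T_m with T_m ≥ 1, an integer T_{m+1} with T_{m+1} > T_m, and a real sequence (x^k). Assume there exists at least one triple (α*, β*, γ*) ∈ ℝ³ such that x^{T_m} = (1 + α*) x^{T_m−1} and x^{k+1} = x^k + h(β*(1 − x^k)x^k − γ* x^k) for all integers k with T_m ≤ k ≤ T_{m+1} − 1. Then the generating triple is unique — any two triples (α, β, γ) ∈ ℝ³ satisfying these equations are equal — if and only if: (1) T_{m+1} − T_m > 1; (2) there exist k₁, k₂ ∈ {T_m, T_m + 1, …, T_{m+1} − 1} such that x^{k₁}(1 − x^{k₂})x^{k₂} ≠ x^{k₂}(1 − x^{k₁})x^{k₁}; and (3) x^{T_m−1} ≠ 0. -/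
/-- Final update-interval consistency: the triple `(α, β, γ)` generates the
data `x` on the final interval: the jump equation at `Tm` and the discrete SIS
dynamics for all `k` with `Tm ≤ k ≤ Tn - 1`. -/
def ConsistentTripleFinal (h : ℝ) (Tm Tn : ℕ) (x : ℕ → ℝ) (p : ℝ × ℝ × ℝ) : Prop :=
  x Tm = (1 + p.1) * x (Tm - 1) ∧
  ∀ k, Tm ≤ k → k + 1 ≤ Tn →
    x (k + 1) = x k + h * (p.2.1 * (1 - x k) * x k - p.2.2 * x k)

/-- Identifiability on the final update interval: assuming at least one
generating triple `(α, β, γ)` exists, it is unique iff `T_{m+1} - T_m > 1`,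
there are `k₁, k₂ ∈ {T_m, …, T_{m+1} - 1}` with
`x^{k₁}(1 - x^{k₂})x^{k₂} ≠ x^{k₂}(1 - x^{k₁})x^{k₁}`, and `x^{T_m - 1} ≠ 0`. -/
theorem final_interval_identifiability
    (h : ℝ) (hh : 0 < h) (Tm Tn : ℕ) (hTm : 1 ≤ Tm) (hT : Tm < Tn)
    (x : ℕ → ℝ)
    (hex : ∃ p : ℝ × ℝ × ℝ, ConsistentTripleFinal h Tm Tn x p) :
    (∀ p q : ℝ × ℝ × ℝ,
        ConsistentTripleFinal h Tm Tn x p → ConsistentTripleFinal h Tm Tn x q →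
        p = q) ↔
      (Tm + 1 < Tn ∧
        (∃ k₁ k₂, (Tm ≤ k₁ ∧ k₁ + 1 ≤ Tn) ∧ (Tm ≤ k₂ ∧ k₂ + 1 ≤ Tn) ∧
          x k₁ * (1 - x k₂) * x k₂ ≠ x k₂ * (1 - x k₁) * x k₁) ∧
        x (Tm - 1) ≠ 0) := by
  obtain ⟨p0, hp0⟩ := hex
  constructor
  · intro huniq
    have h3 : x (Tm - 1) ≠ 0 := by
      intro hz
      have hq : ConsistentTripleFinal h Tm Tn x (p0.1 + 1, p0.2) := by
        refine ⟨?_, hp0.2⟩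
        rw [hz, mul_zero]
        simpa [hz] using hp0.1
      have := congrArg Prod.fst (huniq p0 (p0.1 + 1, p0.2) hp0 hq)
      simp only at this
      linarith
    have h2 : ∃ k₁ k₂, (Tm ≤ k₁ ∧ k₁ + 1 ≤ Tn) ∧ (Tm ≤ k₂ ∧ k₂ + 1 ≤ Tn) ∧
        x k₁ * (1 - x k₂) * x k₂ ≠ x k₂ * (1 - x k₁) * x k₁ := by
      by_contra hnc
      push_neg at hnc
      by_cases hex2 : ∃ k, (Tm ≤ k ∧ k + 1 ≤ Tn) ∧ x k ≠ 0
      · obtain ⟨k0, hk0, hxk0⟩ := hex2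
        have hq : ConsistentTripleFinal h Tm Tn x
            (p0.1, p0.2.1 + 1, p0.2.2 + (1 - x k0)) := by
          refine ⟨hp0.1, ?_⟩
          intro k hk1 hk2
          have base := hp0.2 k hk1 hk2
          have hck : (1 - x k) * x k = (1 - x k0) * x k := by
            by_cases hxk : x k = 0
            · simp [hxk]
            · have he := hnc k k0 ⟨hk1, hk2⟩ hk0
              have h4 : x k * x k0 * (x k - x k0) = 0 := by linear_combination he
              rcases mul_eq_zero.mp h4 with h5 | h5
              · exact absurd h5 (mul_ne_zero hxk hxk0)
              · rw [sub_eq_zero] at h5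
                rw [h5]
          simp only
          linear_combination base - h * hck
        have := congrArg (fun r => r.2.1)
          (huniq p0 (p0.1, p0.2.1 + 1, p0.2.2 + (1 - x k0)) hp0 hq)
        simp only at this
        linarith
      · push_neg at hex2
        have hq : ConsistentTripleFinal h Tm Tn x (p0.1, p0.2.1 + 1, p0.2.2) := by
          refine ⟨hp0.1, ?_⟩
          intro k hk1 hk2
          have base := hp0.2 k hk1 hk2
          have hz := hex2 k ⟨hk1, hk2⟩
          rw [hz] at base ⊢
          simpa using base
        have := congrArg (fun r => r.2.1)
          (huniq p0 (p0.1, p0.2.1 + 1, p0.2.2) hp0 hq)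
        simp only at this
        linarith
    refine ⟨?_, h2, h3⟩
    obtain ⟨k₁, k₂, ⟨a1, b1⟩, ⟨a2, b2⟩, hne⟩ := h2
    by_contra hle
    have hk12 : k₁ = k₂ := by omega
    exact hne (by rw [hk12])
  · rintro ⟨h1, ⟨k₁, k₂, ⟨a1, b1⟩, ⟨a2, b2⟩, hne⟩, h3⟩ p q hp hq
    obtain ⟨hpj, hpd⟩ := hp
    obtain ⟨hqj, hqd⟩ := hq
    have hα : p.1 = q.1 := by
      have heq : (1 + p.1) * x (Tm - 1) = (1 + q.1) * x (Tm - 1) := hpj ▸ hqj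
      have := mul_right_cancel₀ h3 heq
      linarith
    have hx1 : x k₁ ≠ 0 := by
      intro hz; exact hne (by rw [hz]; ring)
    have hx2 : x k₂ ≠ 0 := by
      intro hz; exact hne (by rw [hz]; ring)
    have hx12 : x k₁ ≠ x k₂ := by
      intro hz; exact hne (by rw [hz])
    have hh' : h ≠ 0 := ne_of_gt hh
    have r1 : p.2.1 * (1 - x k₁) * x k₁ - p.2.2 * x k₁
        = q.2.1 * (1 - x k₁) * x k₁ - q.2.2 * x k₁ :=
      mul_left_cancel₀ hh' (by linarith [hpd k₁ a1 b1, hqd k₁ a1 b1])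
    have r2 : p.2.1 * (1 - x k₂) * x k₂ - p.2.2 * x k₂
        = q.2.1 * (1 - x k₂) * x k₂ - q.2.2 * x k₂ :=
      mul_left_cancel₀ hh' (by linarith [hpd k₂ a2 b2, hqd k₂ a2 b2])
    have s1 : (p.2.1 - q.2.1) * (1 - x k₁) = p.2.2 - q.2.2 :=
      mul_right_cancel₀ hx1 (by linear_combination r1)
    have s2 : (p.2.1 - q.2.1) * (1 - x k₂) = p.2.2 - q.2.2 :=
      mul_right_cancel₀ hx2 (by linear_combination r2)
    have hAB : (p.2.1 - q.2.1) * (x k₂ - x k₁) = 0 := by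
      linear_combination s1 - s2
    have hβ : p.2.1 = q.2.1 := by
      rcases mul_eq_zero.mp hAB with h5 | h5
      · linarith [sub_eq_zero.mp h5]
      · exact absurd (sub_eq_zero.mp h5).symm hx12
    have hγ : p.2.2 = q.2.2 := by
      rw [hβ] at s1
      linarith [s1]
    exact Prod.ext hα (Prod.ext hβ hγ)
end

section
/- Fix a step size h > 0, an integer T₁ ≥ 1, and a real sequence (x^k), 0 ≤ k ≤ T₁ − 1. Assume there exists at least one pair (β*, γ*) ∈ ℝ² such that x^{k+1} = x^k + h(β*(1 − x^k)x^k − γ* x^k) for all integers k with 0 ≤ k ≤ T₁ − 2. Then the generating pair is unique — any two pairs (β, γ), (β', γ') ∈ ℝ² satisfying x^{k+1} = x^k + h(β(1 − x^k)x^k − γ x^k) for all 0 ≤ k ≤ T₁ − 2 are equal — if and only if T₁ > 2 and there exist k₁, k₂ ∈ {0, 1, …, T₁ − 2} such that x^{k₁}(1 − x^{k₂})x^{k₂} ≠ x^{k₂}(1 − x^{k₁})x^{k₁}. -/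
/-- Initial-interval consistency: the pair `(β, γ)` generates the data `x`
via the discrete SIS dynamics for all `k` with `0 ≤ k ≤ T₁ - 2`. -/
def ConsistentPair (h : ℝ) (T₁ : ℕ) (x : ℕ → ℝ) (p : ℝ × ℝ) : Prop :=
  ∀ k, k + 2 ≤ T₁ →
    x (k + 1) = x k + h * (p.1 * (1 - x k) * x k - p.2 * x k)

/-- Identifiability on the initial interval (no impulse): assuming at least one
generating pair `(β, γ)` exists, it is unique iff `T₁ > 2` and there exist
`k₁, k₂ ∈ {0, …, T₁ - 2}` with
`x^{k₁}(1 - x^{k₂})x^{k₂} ≠ x^{k₂}(1 - x^{k₁})x^{k₁}`. -/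
theorem initial_interval_identifiability
    (h : ℝ) (hh : 0 < h) (T₁ : ℕ) (hT₁ : 1 ≤ T₁) (x : ℕ → ℝ)
    (hex : ∃ p : ℝ × ℝ, ConsistentPair h T₁ x p) :
    (∀ p q : ℝ × ℝ, ConsistentPair h T₁ x p → ConsistentPair h T₁ x q → p = q) ↔
      (2 < T₁ ∧
        ∃ k₁ k₂, k₁ + 2 ≤ T₁ ∧ k₂ + 2 ≤ T₁ ∧
          x k₁ * (1 - x k₂) * x k₂ ≠ x k₂ * (1 - x k₁) * x k₁) := by
  obtain ⟨p, hp⟩ := hex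
  constructor
  · intro huniq
    by_contra hcon
    push_neg at hcon
    have hall : ∀ k₁ k₂, k₁ + 2 ≤ T₁ → k₂ + 2 ≤ T₁ →
        x k₁ * (1 - x k₂) * x k₂ = x k₂ * (1 - x k₁) * x k₁ := by
      intro k₁ k₂ h1 h2
      by_cases hT : 2 < T₁
      · exact hcon hT k₁ k₂ h1 h2
      · have hk₁ : k₁ = 0 := by omega
        have hk₂ : k₂ = 0 := by omega
        subst hk₁; subst hk₂; rfl
    by_cases hb : ∀ k, k + 2 ≤ T₁ → x k = 0
    · have hq : ConsistentPair h T₁ x (p.1 + 1, p.2) := by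
        intro k hk
        have h0 := hb k hk
        have h1 := hp k hk
        simp only [h0] at h1 ⊢
        linarith [h1]
      have := huniq p (p.1 + 1, p.2) hp hq
      have h1 : p.1 = p.1 + 1 := congrArg Prod.fst this
      linarith
    · push_neg at hb
      obtain ⟨k₀, hk₀, hx₀⟩ := hb
      have hq : ConsistentPair h T₁ x (p.1 + x k₀, p.2 + (1 - x k₀) * x k₀) := by
        intro k hk
        have key := hall k₀ k hk₀ hk
        have h1 := hp k hk
        dsimp only
        linear_combination h1 - h * key
      have := huniq p _ hp hq
      have h1 : p.1 = p.1 + x k₀ := congrArg Prod.fst this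
      exact hx₀ (by linarith)
  · rintro ⟨hT, k₁, k₂, h1, h2, hne⟩ p q hpc hqc
    have E : ∀ k, k + 2 ≤ T₁ →
        (p.1 - q.1) * ((1 - x k) * x k) = (p.2 - q.2) * x k := by
      intro k hk
      have e1 := hpc k hk
      have e2 := hqc k hk
      have heq : h * (p.1 * (1 - x k) * x k - p.2 * x k)
          = h * (q.1 * (1 - x k) * x k - q.2 * x k) := by linarith
      have := mul_left_cancel₀ hh.ne' heq
      linear_combination this
    have A1 := E k₁ h1
    have A2 := E k₂ h2
    have hdet : x k₁ * (1 - x k₂) * x k₂ - x k₂ * (1 - x k₁) * x k₁ ≠ 0 :=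
      sub_ne_zero.mpr hne
    have hv : (p.2 - q.2) * (x k₁ * (1 - x k₂) * x k₂ - x k₂ * (1 - x k₁) * x k₁) = 0 := by
      linear_combination ((1 - x k₁) * x k₁) * A2 - ((1 - x k₂) * x k₂) * A1
    have hu : (p.1 - q.1) * (x k₁ * (1 - x k₂) * x k₂ - x k₂ * (1 - x k₁) * x k₁) = 0 := by
      linear_combination x k₁ * A2 - x k₂ * A1
    have hv0 : p.2 = q.2 := by
      have := (mul_eq_zero.mp hv).resolve_right hdet
      linarith
    have hu0 : p.1 = q.1 := by
      have := (mul_eq_zero.mp hu).resolve_right hdet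
      linarith
    exact Prod.ext hu0 hv0
end
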